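/- arXiv:1010.0328 — 7 statements merged into one kernel-verified Lean document; each statement's English description precedes it below -/
import Mathlib

section
/- Suppose A, B, C, D are real matrices (A of size n₁×m₁, B of size n₂×m₂, C of size n₁×m₁, D of size n₂×m₂) such that AᵀA, BᵀB, CᵀC, DᵀD are all diagonal matrices, and at least one of AᵀC = 0 or BᵀD = 0 holds. Then for any real γ, the matrix L = A ⊗ B + γ·C ⊗ D has orthogonal columns, i.e., LᵀL is diagonal. -/
/-!
By the mixed-product rule the Gram matrix of `A ⊗ B + γ (C ⊗ D)` is
`(AᵀA) ⊗ (BᵀB) + γ² (CᵀC) ⊗ (DᵀD)` plus the cross term `γ (AᵀC) ⊗ (BᵀD)` and its transpose.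
A Kronecker product of diagonal matrices is diagonal, and the cross terms vanish because one of
their Kronecker factors is zero.
-/

open Matrix Kronecker

namespace Matrix

variable {R : Type*} {l m n p q r : Type*} [Fintype l] [Fintype p]

theorem kronecker_transpose_mul_kronecker [CommSemiring R]
    (A : Matrix l m R) (B : Matrix p n R) (C : Matrix l q R) (D : Matrix p r R) :
    (A ⊗ₖ B)ᵀ * (C ⊗ₖ D) = (Aᵀ * C) ⊗ₖ (Bᵀ * D) := by
  rw [← kroneckerMap_transpose, mul_kronecker_mul]

theorem isDiag_transpose_mul_self_kronecker [CommSemiring R] [DecidableEq m] [DecidableEq n]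
    {A : Matrix l m R} {B : Matrix p n R}
    (hA : (Aᵀ * A).IsDiag) (hB : (Bᵀ * B).IsDiag) : ((A ⊗ₖ B)ᵀ * (A ⊗ₖ B)).IsDiag := by
  rw [kronecker_transpose_mul_kronecker]
  exact hA.kronecker hB

theorem isDiag_transpose_mul_self_smul [CommSemiring R] {X : Matrix l m R}
    (hX : (Xᵀ * X).IsDiag) (c : R) : ((c • X)ᵀ * (c • X)).IsDiag := by
  rw [transpose_smul, Matrix.smul_mul, Matrix.mul_smul, smul_smul]
  exact hX.smul _

theorem isDiag_transpose_mul_self_add [CommSemiring R] {X Y : Matrix l m R}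
    (hX : (Xᵀ * X).IsDiag) (hY : (Yᵀ * Y).IsDiag) (hXY : Xᵀ * Y = 0) :
    ((X + Y)ᵀ * (X + Y)).IsDiag := by
  have hYX : Yᵀ * X = 0 := by
    rw [← transpose_transpose (Yᵀ * X), transpose_mul, transpose_transpose, hXY, transpose_zero]
  rw [transpose_add, Matrix.add_mul, Matrix.mul_add, Matrix.mul_add, hXY, hYX, add_zero, zero_add]
  exact hX.add hY

theorem kronecker_transpose_mul_kronecker_eq_zero [CommSemiring R]
    {A : Matrix l m R} {B : Matrix p n R} {C : Matrix l q R} {D : Matrix p r R}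
    (h : Aᵀ * C = 0 ∨ Bᵀ * D = 0) : (A ⊗ₖ B)ᵀ * (C ⊗ₖ D) = 0 := by
  rw [kronecker_transpose_mul_kronecker]
  rcases h with h | h <;> simp [h]

end Matrix

theorem kronecker_sum_orthogonal_columns (n₁ m₁ n₂ m₂ : ℕ) (γ : ℝ)
    (A : Matrix (Fin n₁) (Fin m₁) ℝ) (B : Matrix (Fin n₂) (Fin m₂) ℝ)
    (C : Matrix (Fin n₁) (Fin m₁) ℝ) (D : Matrix (Fin n₂) (Fin m₂) ℝ)
    (hA : (Aᵀ * A).IsDiag) (hB : (Bᵀ * B).IsDiag)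
    (hC : (Cᵀ * C).IsDiag) (hD : (Dᵀ * D).IsDiag)
    (hAC : Aᵀ * C = 0 ∨ Bᵀ * D = 0) :
    ((A ⊗ₖ B + γ • (C ⊗ₖ D))ᵀ * (A ⊗ₖ B + γ • (C ⊗ₖ D))).IsDiag := by
  refine isDiag_transpose_mul_self_add (isDiag_transpose_mul_self_kronecker hA hB)
    (isDiag_transpose_mul_self_smul (isDiag_transpose_mul_self_kronecker hC hD) γ) ?_
  rw [Matrix.mul_smul, kronecker_transpose_mul_kronecker_eq_zero hAC, smul_zero]
end

section
/- Let n ≥ 4 with n ≡ 2 (mod 4). Then there do not exist two functions a, b from Fin n to ℤ, each a bijection onto the set {±1, ±3, …, ±(n−1)} (i.e., the odd integers of absolute value less than n), such that ∑_{i} a(i)·b(i) = 0. -/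
/-!
Every odd integer is `±1 mod 4`, and for odd `x, y` we have `x + y ≡ xy + 1 (mod 4)` because
`(x - 1)(y - 1)` is a product of two even numbers. Iterating, a sum of `m` odd integers is
congruent to `m - 1` plus their product. For two Latin hypercube columns `a, b` both `∏ aᵢ` and
`∏ bᵢ` are the product `P` of all levels, so `∏ aᵢbᵢ = P²`, an odd square, hence `≡ 1 (mod 4)`.
Thus `∑ aᵢbᵢ ≡ n (mod 4)`, which is `2 mod 4`, so the inner product cannot vanish.
-/

open Finset

theorem Int.add_modEq_mul_add_one_of_odd {x y : ℤ} (hx : Odd x) (hy : Odd y) :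
    x + y ≡ x * y + 1 [ZMOD 4] := by
  obtain ⟨k, rfl⟩ := hx
  obtain ⟨l, rfl⟩ := hy
  exact Int.modEq_iff_dvd.mpr ⟨k * l, by ring⟩

theorem Int.sum_add_one_modEq_prod_add_card {ι : Type*} (s : Finset ι) {c : ι → ℤ}
    (hc : ∀ i ∈ s, Odd (c i)) : ∑ i ∈ s, c i + 1 ≡ ∏ i ∈ s, c i + #s [ZMOD 4] := by
  induction s using Finset.cons_induction with
  | empty => simp [Int.ModEq.refl]
  | cons j s hj ih =>
    have hcj : Odd (c j) := hc j (mem_cons_self j s)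
    have hcs : ∀ i ∈ s, Odd (c i) := fun i hi => hc i (mem_cons_of_mem hi)
    have hprod : Odd (∏ i ∈ s, c i) := prod_induction c Odd (fun _ _ => Odd.mul) odd_one hcs
    rw [sum_cons, prod_cons, card_cons, Nat.cast_succ]
    calc c j + ∑ i ∈ s, c i + 1
        ≡ c j + (∏ i ∈ s, c i + #s) [ZMOD 4] := by
          rw [add_assoc]; exact (ih hcs).add_left _
      _ = c j + ∏ i ∈ s, c i + #s := by ring
      _ ≡ c j * ∏ i ∈ s, c i + 1 + #s [ZMOD 4] :=
          (Int.add_modEq_mul_add_one_of_odd hcj hprod).add_right _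
      _ = c j * ∏ i ∈ s, c i + (#s + 1) := by ring

theorem Set.BijOn.prod_univ_eq_finprod_mem {ι M : Type*} [Fintype ι] [CommMonoid M]
    {a : ι → M} {s : Set M} (h : Set.BijOn a Set.univ s) : ∏ i, a i = ∏ᶠ x ∈ s, x := by
  rw [← finprod_eq_prod_of_fintype, ← finprod_mem_univ]
  exact finprod_mem_eq_of_bijOn a h fun _ _ => rfl

theorem no_orthogonal_LH_pair_general (n : ℕ) (hmod : n % 4 = 2) :
    ¬ ∃ a b : Fin n → ℤ,
      Set.BijOn a Set.univ {x : ℤ | Odd x ∧ |x| < (n : ℤ)} ∧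
      Set.BijOn b Set.univ {x : ℤ | Odd x ∧ |x| < (n : ℤ)} ∧
      ∑ i : Fin n, a i * b i = 0 := by
  rintro ⟨a, b, ha, hb, hsum⟩
  have ha_odd : ∀ i, Odd (a i) := fun i => (ha.mapsTo (Set.mem_univ i)).1
  have hb_odd : ∀ i, Odd (b i) := fun i => (hb.mapsTo (Set.mem_univ i)).1
  have hprod : ∏ i, a i * b i = (∏ i, a i) ^ 2 := by
    rw [prod_mul_distrib, hb.prod_univ_eq_finprod_mem, ← ha.prod_univ_eq_finprod_mem, sq]
  have hsq : (∏ i, a i) ^ 2 % 4 = 1 :=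
    Int.sq_mod_four_eq_one_of_odd (prod_induction a Odd (fun _ _ => Odd.mul) odd_one
      fun i _ => ha_odd i)
  have key := Int.sum_add_one_modEq_prod_add_card univ fun i _ => (ha_odd i).mul (hb_odd i)
  rw [hsum, hprod, card_univ, Fintype.card_fin] at key
  unfold Int.ModEq at key
  omega

theorem no_orthogonal_LH_pair (n : ℕ) (hn : 4 ≤ n) (hmod : n % 4 = 2) :
    ¬ ∃ a b : Fin n → ℤ,
      Set.BijOn a Set.univ {x : ℤ | Odd x ∧ |x| < (n : ℤ)} ∧
      Set.BijOn b Set.univ {x : ℤ | Odd x ∧ |x| < (n : ℤ)} ∧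
      ∑ i : Fin n, a i * b i = 0 :=
  no_orthogonal_LH_pair_general n hmod
end

section
/- If n ≡ 2 (mod 4), then for any permutation b of the set S = {±1, ±3, …, ±(n−1)} ⊂ ℤ and the specific enumeration a with a(i) = 2i−1 and a(i+n/2) = −(2i−1) for i = 1,…,n/2, the sum ∑_{i=1}^{n} a(i)·b(i) is an odd multiple of 2, hence nonzero. In particular ∑ a(i)b(i) ≠ 0. -/
/-!
Every `a i` and `b i` is odd, so `(a i - 1) * (b i - 1)` is divisible by `4`. Summing over `i`
gives `∑ a i * b i ≡ ∑ a i + ∑ b i - n [ZMOD 4]`. Both `a` and `b` enumerate sets that are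
symmetric under negation, so `∑ a i = ∑ b i = 0`, and `∑ a i * b i ≡ -n ≡ 2 [ZMOD 4]`.
-/

theorem Int.four_dvd_sub_one_mul_sub_one {x y : ℤ} (hx : Odd x) (hy : Odd y) :
    4 ∣ (x - 1) * (y - 1) := by
  obtain ⟨s, rfl⟩ := hx
  obtain ⟨t, rfl⟩ := hy
  exact ⟨s * t, by ring⟩

theorem Finset.sum_mul_modEq_four_of_odd {ι : Type*} (s : Finset ι) {x y : ι → ℤ}
    (hx : ∀ i ∈ s, Odd (x i)) (hy : ∀ i ∈ s, Odd (y i)) :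
    ∑ i ∈ s, x i * y i ≡ ∑ i ∈ s, x i + ∑ i ∈ s, y i - s.card [ZMOD 4] := by
  have hdvd : 4 ∣ ∑ i ∈ s, (x i - 1) * (y i - 1) :=
    Finset.dvd_sum fun i hi => Int.four_dvd_sub_one_mul_sub_one (hx i hi) (hy i hi)
  have hexpand : ∑ i ∈ s, (x i - 1) * (y i - 1) =
      ∑ i ∈ s, x i * y i - (∑ i ∈ s, x i + ∑ i ∈ s, y i - s.card) := by
    simp only [sub_one_mul, mul_sub_one, Finset.sum_sub_distrib, Finset.sum_const, nsmul_one]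
    ring
  exact (Int.modEq_iff_dvd.mpr (hexpand ▸ hdvd)).symm

theorem Finset.sum_eq_zero_of_neg_mem {G : Type*} [AddCommGroup G] [IsAddTorsionFree G]
    {s : Finset G} (hs : ∀ x ∈ s, -x ∈ s) : ∑ x ∈ s, x = 0 := by
  have hneg : ∑ x ∈ s, x = ∑ x ∈ s, -x :=
    Finset.sum_nbij' (fun x => -x) (fun x => -x) hs hs (by simp) (by simp) (by simp)
  rw [Finset.sum_neg_distrib] at hneg
  exact self_eq_neg.mp hneg

theorem Set.BijOn.sum_univ_eq_zero_of_neg_mem {ι G : Type*} [Fintype ι] [AddCommGroup G]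
    [IsAddTorsionFree G] {b : ι → G} {t : Set G} (hb : Set.BijOn b Set.univ t)
    (ht : ∀ x ∈ t, -x ∈ t) : ∑ i, b i = 0 := by
  classical
  have hmem : ∀ x, x ∈ Finset.univ.image b ↔ x ∈ t := fun x => by
    rw [← Finset.mem_coe, Finset.coe_image, Finset.coe_univ, hb.image_eq]
  have hinj : Set.InjOn b ↑(Finset.univ : Finset ι) := by
    simpa only [Finset.coe_univ] using hb.injOn
  calc ∑ i, b i = ∑ x ∈ Finset.univ.image b, x := (Finset.sum_image (f := fun x => x) hinj).symm
    _ = 0 := Finset.sum_eq_zero_of_neg_mem fun x hx => (hmem _).mpr (ht x ((hmem x).mp hx))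

theorem Fin.sum_univ_add_self_eq_zero {G : Type*} [AddCommGroup G] {m : ℕ}
    (f : Fin (m + m) → G) (hf : ∀ i, f (Fin.natAdd m i) = -f (Fin.castAdd m i)) :
    ∑ i, f i = 0 := by
  rw [Fin.sum_univ_add]
  simp only [hf, Finset.sum_neg_distrib, add_neg_cancel]

theorem Int.exists_odd_eq_two_mul_of_emod_four_eq_two {z : ℤ} (hz : z % 4 = 2) :
    ∃ k, Odd k ∧ z = 2 * k :=
  ⟨z / 2, ⟨z / 4, by omega⟩, by omega⟩

theorem parity_sum_odd_multiple_of_two (n : ℕ) (hmod : n % 4 = 2)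
    (a : Fin n → ℤ)
    (ha : ∀ i : Fin n, a i = if (i : ℕ) < n / 2 then 2 * (i : ℤ) + 1
            else -(2 * ((i : ℤ) - n / 2) + 1))
    (b : Fin n → ℤ)
    (hb : Set.BijOn b Set.univ {x : ℤ | Odd x ∧ |x| < (n : ℤ)}) :
    (∃ k : ℤ, Odd k ∧ ∑ i : Fin n, a i * b i = 2 * k) ∧
      ∑ i : Fin n, a i * b i ≠ 0 := by
  obtain ⟨m, rfl⟩ : ∃ m, n = m + m := ⟨n / 2, by omega⟩
  have ha_odd (i : Fin (m + m)) : Odd (a i) := by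
    rw [ha]
    split_ifs
    · exact ⟨i, by ring⟩
    · exact ⟨-((i : ℤ) - ((m + m : ℕ) : ℤ) / 2) - 1, by ring⟩
  have ha_sum : ∑ i, a i = 0 := Fin.sum_univ_add_self_eq_zero a fun i => by
    rw [ha, ha]
    simp only [Fin.val_natAdd, Fin.val_castAdd]
    split_ifs <;> push_cast <;> omega
  have hb_sum : ∑ i, b i = 0 :=
    hb.sum_univ_eq_zero_of_neg_mem fun x hx => ⟨hx.1.neg, by rw [abs_neg]; exact hx.2⟩
  have hsum := Finset.univ.sum_mul_modEq_four_of_odd (fun i _ => ha_odd i)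
    (fun i _ => (hb.mapsTo (Set.mem_univ i)).1)
  rw [ha_sum, hb_sum, Finset.card_univ, Fintype.card_fin] at hsum
  have hsum_mod : (∑ i, a i * b i) % 4 = 2 := by
    unfold Int.ModEq at hsum
    omega
  exact ⟨Int.exists_odd_eq_two_mul_of_emod_four_eq_two hsum_mod, by omega⟩
end

section
/- Let n₁, n₂ be positive integers and n = n₁n₂. Let a : Fin n₁ → ℤ with a(i) ∈ {1, −1}, let b : Fin n₂ → ℤ be a bijection onto the set of n₂ integers centered at 0 with spacing 1 scaled by 2 (i.e., onto {−(n₂−1), −(n₂−3), …, n₂−3, n₂−1}), let c : Fin n₁ → ℤ be a bijection onto {−(n₁−1), −(n₁−3), …, n₁−1}, and let d : Fin n₂ → ℤ with d(j) ∈ {1, −1}. Assume that whenever c(p) = −c(p′), we have a(p) = a(p′). Then the map (i,j) ↦ a(i)·b(j) + n₂·c(i)·d(j) is a bijection from Fin n₁ × Fin n₂ onto the set {−(n−1), −(n−3), …, n−3, n−1}. -/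
/-- The set of `n` equally spaced levels `{-(n-1), -(n-3), …, n-3, n-1}` (levels scaled by 2). -/
def levelSet (n : ℕ) : Set ℤ :=
  {x : ℤ | |x| ≤ (n : ℤ) - 1 ∧ (2 : ℤ) ∣ (x + (n : ℤ) - 1)}

/-!
Write the levels as `2k - m + 1` with `0 ≤ k < m`. Then `u + n₂ v` with `u`, `v` levels for `n₂`
and `n₁` is the level for `n₁ n₂` with index `k + n₂ l` (mixed radix), so `(u, v) ↦ u + n₂ v` is
injective on pairs of levels. The pair `(a i b j, c i d j)` determines `(i, j)`: if `d` agrees at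
`j` and `j'`, then `c` and then `b` are cancelled; if `d` flips sign, then `c i = -c i'`, so
`a i = a i'` by the compatibility condition, whence `j = j'`, contradicting the sign flip.
Injectivity into a set of `n₁ n₂` levels gives bijectivity by counting.
-/

open Set Function

theorem Set.bijOn_of_injOn_of_ncard_le {α β : Type*} {f : α → β} {s : Set α} {t : Set β}
    (hf : MapsTo f s t) (hinj : InjOn f s) (ht : t.Finite) (hst : t.ncard ≤ s.ncard) :
    BijOn f s t :=
  ⟨hf, hinj, (eq_of_subset_of_ncard_le hf.image_subset
    (by rwa [hinj.ncard_image]) ht).symm.subset⟩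

lemma levelSet_eq_image (n : ℕ) :
    levelSet n = (fun k : ℤ => 2 * k - n + 1) '' Ico 0 n := by
  ext x
  simp only [levelSet, mem_ofPred_eq, mem_image, mem_Ico, abs_le]
  constructor
  · rintro ⟨⟨h1, h2⟩, m, hm⟩
    exact ⟨m, by omega, by omega⟩
  · rintro ⟨k, ⟨h1, h2⟩, rfl⟩
    exact ⟨⟨by omega, by omega⟩, k, by omega⟩

lemma levelSet_finite (n : ℕ) : (levelSet n).Finite := by
  rw [levelSet_eq_image]
  exact (finite_Ico _ _).image _

lemma ncard_levelSet (n : ℕ) : (levelSet n).ncard = n := by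
  rw [levelSet_eq_image, ncard_image_of_injective _ (fun x y h => by omega), ← Finset.coe_Ico,
    ncard_coe_finset, Int.card_Ico]
  simp

lemma sign_mul_mem_levelSet {n : ℕ} {s x : ℤ} (hs : s = 1 ∨ s = -1) (hx : x ∈ levelSet n) :
    s * x ∈ levelSet n := by
  simp only [levelSet, mem_ofPred_eq, abs_le] at hx ⊢
  rcases hs with rfl | rfl <;> omega

lemma mapsTo_add_mul_levelSet (n₁ n₂ : ℕ) :
    MapsTo (fun p : ℤ × ℤ => p.1 + n₂ * p.2) (levelSet n₂ ×ˢ levelSet n₁)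
      (levelSet (n₁ * n₂)) := by
  rintro ⟨u, v⟩ ⟨hu, hv⟩
  rw [levelSet_eq_image] at hu hv ⊢
  obtain ⟨k, ⟨hk₀, hk⟩, rfl⟩ := hu
  obtain ⟨l, ⟨hl₀, hl⟩, rfl⟩ := hv
  refine ⟨k + n₂ * l, ⟨by positivity, ?_⟩, by push_cast; ring⟩
  push_cast
  nlinarith

lemma injOn_add_mul_levelSet (n₁ n₂ : ℕ) :
    InjOn (fun p : ℤ × ℤ => p.1 + n₂ * p.2) (levelSet n₂ ×ˢ levelSet n₁) := by
  rintro ⟨u, v⟩ ⟨hu, hv⟩ ⟨u', v'⟩ ⟨hu', hv'⟩ h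
  rw [levelSet_eq_image] at hu hv hu' hv'
  obtain ⟨k, ⟨hk₀, hk⟩, rfl⟩ := hu
  obtain ⟨l, -, rfl⟩ := hv
  obtain ⟨k', ⟨hk₀', hk'⟩, rfl⟩ := hu'
  obtain ⟨l', -, rfl⟩ := hv'
  have hn₂ : (0 : ℤ) < n₂ := by omega
  have hdigits : k' + n₂ * l' = k + n₂ * l := by simp only at h; linarith
  have hdiv := (Int.ediv_emod_unique (q := l) hn₂).2 ⟨rfl, hk₀, hk⟩
  have hdiv' := (Int.ediv_emod_unique hn₂).2 ⟨hdigits, hk₀', hk'⟩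
  obtain rfl : l = l' := hdiv.1.symm.trans hdiv'.1
  obtain rfl : k = k' := hdiv.2.symm.trans hdiv'.2
  rfl

lemma injective_mul_mul_of_neg_imp_eq {ι κ : Type*} {a c : ι → ℤ} {b d : κ → ℤ}
    (ha : ∀ i, a i ≠ 0) (hb : Injective b) (hc : Injective c) (hd : ∀ j, d j = 1 ∨ d j = -1)
    (hac : ∀ p p', c p = -c p' → a p = a p') :
    Injective fun ij : ι × κ => (a ij.1 * b ij.2, c ij.1 * d ij.2) := by
  rintro ⟨i, j⟩ ⟨i', j'⟩ h
  simp only [Prod.mk.injEq] at h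
  obtain ⟨hab, hcd⟩ := h
  have hd₀ : d j ≠ 0 := by rcases hd j with h | h <;> simp [h]
  rcases show d j' = d j ∨ d j' = -d j by rcases hd j with h | h <;> rcases hd j' with h' | h' <;>
      simp [h, h'] with hsame | hflip
  · obtain rfl : i = i' := hc (mul_right_cancel₀ hd₀ (by rw [hcd, hsame]))
    obtain rfl : j = j' := hb (mul_left_cancel₀ (ha i) hab)
    rfl
  · have hneg : c i = -c i' := mul_right_cancel₀ hd₀ (by rw [hcd, hflip]; ring)
    rw [hac i i' hneg] at hab
    obtain rfl : j = j' := hb (mul_left_cancel₀ (ha i') hab)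
    exact absurd (by linarith : d j = 0) hd₀

theorem latin_hypercube_column_a_general (n₁ n₂ : ℕ)
    (a : Fin n₁ → ℤ) (ha : ∀ i, a i = 1 ∨ a i = -1)
    (b : Fin n₂ → ℤ) (hb : Set.BijOn b Set.univ (levelSet n₂))
    (c : Fin n₁ → ℤ) (hc : Set.BijOn c Set.univ (levelSet n₁))
    (d : Fin n₂ → ℤ) (hd : ∀ j, d j = 1 ∨ d j = -1)
    (hac : ∀ p p' : Fin n₁, c p = -c p' → a p = a p') :
    Set.BijOn (fun ij : Fin n₁ × Fin n₂ => a ij.1 * b ij.2 + (n₂ : ℤ) * c ij.1 * d ij.2)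
      Set.univ (levelSet (n₁ * n₂)) := by
  set pair := fun ij : Fin n₁ × Fin n₂ => (a ij.1 * b ij.2, c ij.1 * d ij.2)
  have hpair : MapsTo pair univ (levelSet n₂ ×ˢ levelSet n₁) := fun ij _ =>
    ⟨sign_mul_mem_levelSet (ha _) (hb.mapsTo trivial),
      (mul_comm (d ij.2) (c ij.1) ▸ sign_mul_mem_levelSet (hd _) (hc.mapsTo trivial) :
        c ij.1 * d ij.2 ∈ levelSet n₁)⟩
  have ha₀ : ∀ i, a i ≠ 0 := fun i => by rcases ha i with h | h <;> simp [h]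
  have hpair_inj : Injective pair := injective_mul_mul_of_neg_imp_eq ha₀
    (injOn_univ.1 hb.injOn) (injOn_univ.1 hc.injOn) hd hac
  have hcomp : (fun ij : Fin n₁ × Fin n₂ => a ij.1 * b ij.2 + (n₂ : ℤ) * c ij.1 * d ij.2) =
      (fun p : ℤ × ℤ => p.1 + n₂ * p.2) ∘ pair := by
    funext ij
    simp only [comp_apply, pair, mul_assoc]
  rw [hcomp]
  refine bijOn_of_injOn_of_ncard_le ((mapsTo_add_mul_levelSet n₁ n₂).comp hpair)
    ((injOn_add_mul_levelSet n₁ n₂).comp hpair_inj.injOn hpair) (levelSet_finite _) ?_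
  simp [ncard_levelSet]

theorem latin_hypercube_column_a (n₁ n₂ : ℕ) (hn₁ : 0 < n₁) (hn₂ : 0 < n₂)
    (a : Fin n₁ → ℤ) (ha : ∀ i, a i = 1 ∨ a i = -1)
    (b : Fin n₂ → ℤ) (hb : Set.BijOn b Set.univ (levelSet n₂))
    (c : Fin n₁ → ℤ) (hc : Set.BijOn c Set.univ (levelSet n₁))
    (d : Fin n₂ → ℤ) (hd : ∀ j, d j = 1 ∨ d j = -1)
    (hac : ∀ p p' : Fin n₁, c p = -c p' → a p = a p') :
    Set.BijOn (fun ij : Fin n₁ × Fin n₂ => a ij.1 * b ij.2 + (n₂ : ℤ) * c ij.1 * d ij.2)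
      Set.univ (levelSet (n₁ * n₂)) :=
  latin_hypercube_column_a_general n₁ n₂ a ha b hb c hc d hd hac
end

section
/- Let n₁, n₂ ≥ 1 and n = n₁n₂. With a, b, c, d as in the Latin-hypercube column construction, assume instead the alternative condition: whenever b(q) = −b(q′), one has d(q) = d(q′). Then (i,j) ↦ a(i)·b(j) + n₂·c(i)·d(j) is again a bijection from Fin n₁ × Fin n₂ onto {−(n−1), −(n−3), …, n−3, n−1}. -/
open Set

section SignTwist

variable {S : Set ℤ} {s s' x x' : ℤ}

lemma sign_mul_mem (hS : ∀ y ∈ S, -y ∈ S) (hs : s = 1 ∨ s = -1) (hx : x ∈ S) : s * x ∈ S := by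
  rcases hs with rfl | rfl
  · simpa using hx
  · simpa using hS x hx

lemma ne_zero_of_eq_one_or_neg_one (hs : s = 1 ∨ s = -1) : s ≠ 0 := by
  rcases hs with rfl | rfl <;> norm_num

lemma mul_self_of_eq_one_or_neg_one (hs : s = 1 ∨ s = -1) : s * s = 1 := by
  rcases hs with rfl | rfl <;> norm_num

lemma eq_or_eq_neg_of_sign_mul_eq (hs : s = 1 ∨ s = -1) (hs' : s' = 1 ∨ s' = -1)
    (h : s * x = s' * x') : x = x' ∨ x = -x' := by
  rcases hs with rfl | rfl <;> rcases hs' with rfl | rfl <;> omega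

variable {ι κ : Type*} {T : Set ℤ} {a c : ι → ℤ} {b d : κ → ℤ}

theorem bijOn_sign_twist (hS : ∀ y ∈ S, -y ∈ S) (hT : ∀ y ∈ T, -y ∈ T)
    (ha : ∀ i, a i = 1 ∨ a i = -1) (hb : BijOn b univ S) (hc : BijOn c univ T)
    (hd : ∀ j, d j = 1 ∨ d j = -1) (hbd : ∀ q q', b q = -b q' → d q = d q') :
    BijOn (fun ij : ι × κ => (a ij.1 * b ij.2, c ij.1 * d ij.2)) univ (S ×ˢ T) := by
  refine ⟨fun ⟨i, j⟩ _ => ?_, fun ⟨i, j⟩ _ ⟨i', j'⟩ _ h => ?_, fun ⟨u, v⟩ ⟨hu, hv⟩ => ?_⟩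
  · refine ⟨sign_mul_mem hS (ha i) (hb.mapsTo trivial), ?_⟩
    show c i * d j ∈ T
    rw [mul_comm]
    exact sign_mul_mem hT (hd j) (hc.mapsTo trivial)
  · obtain ⟨hab, hcd⟩ : a i * b j = a i' * b j' ∧ c i * d j = c i' * d j' := Prod.mk.inj h
    have hdd : d j = d j' := by
      rcases eq_or_eq_neg_of_sign_mul_eq (ha i) (ha i') hab with hbb | hbb
      · rw [hb.injOn trivial trivial hbb]
      · exact hbd j j' hbb
    rw [hdd] at hcd
    obtain rfl : i = i' :=
      hc.injOn trivial trivial (mul_right_cancel₀ (ne_zero_of_eq_one_or_neg_one (hd j')) hcd)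
    obtain rfl : j = j' :=
      hb.injOn trivial trivial (mul_left_cancel₀ (ne_zero_of_eq_one_or_neg_one (ha i)) hab)
    rfl
  · obtain ⟨j₁, -, hj₁⟩ := hb.surjOn hu
    obtain ⟨j₂, -, hj₂⟩ := hb.surjOn (hS u hu)
    have hd₂ : d j₂ = d j₁ := hbd j₂ j₁ (by rw [hj₁, hj₂])
    obtain ⟨i, -, hi⟩ := hc.surjOn (sign_mul_mem hT (hd j₁) hv)
    have hcd : c i * d j₁ = v := by
      rw [hi, mul_comm, ← mul_assoc, mul_self_of_eq_one_or_neg_one (hd j₁), one_mul]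
    rcases ha i with hai | hai
    · exact ⟨(i, j₁), trivial, by simp only [hai, hj₁, hcd, one_mul]⟩
    · exact ⟨(i, j₂), trivial, by simp only [hai, hj₂, hd₂, hcd, neg_mul_neg, one_mul]⟩

end SignTwist

section LevelSet

lemma neg_mem_levelSet {n : ℕ} {x : ℤ} (h : x ∈ levelSet n) : -x ∈ levelSet n :=
  ⟨by simpa using h.1, by obtain ⟨-, h2⟩ := h; omega⟩

lemma add_mul_mem_levelSet {n₁ n₂ : ℕ} {u v : ℤ} (hu : u ∈ levelSet n₂) (hv : v ∈ levelSet n₁) :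
    u + n₂ * v ∈ levelSet (n₁ * n₂) := by
  obtain ⟨hu, k, hk⟩ := hu
  obtain ⟨hv, l, hl⟩ := hv
  have hn₂ : (0 : ℤ) ≤ n₂ - 1 := (abs_nonneg u).trans hu
  rw [abs_le] at hu hv
  refine ⟨?_, k + n₂ * l, ?_⟩
  · rw [abs_le]
    push_cast
    constructor <;> nlinarith
  · push_cast
    linear_combination hk + n₂ * hl

lemma eq_and_eq_of_add_mul_eq {n₁ n₂ : ℕ} {u u' v v' : ℤ}
    (hu : u ∈ levelSet n₂) (hu' : u' ∈ levelSet n₂) (hv : v ∈ levelSet n₁) (hv' : v' ∈ levelSet n₁)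
    (h : u + n₂ * v = u' + n₂ * v') : u = u' ∧ v = v' := by
  obtain ⟨hu, -⟩ := hu
  obtain ⟨hu', -⟩ := hu'
  obtain ⟨-, hv⟩ := hv
  obtain ⟨-, hv'⟩ := hv'
  rw [abs_le] at hu hu'
  -- `v ≡ v' (mod 2)`, so `v ≠ v'` would force `|u - u'| = n₂ |v - v'| ≥ 2 n₂`.
  have hvv : v = v' := by
    by_contra hne
    have h2 : v - v' ≥ 2 ∨ v - v' ≤ -2 := by omega
    rcases h2 with h2 | h2 <;> nlinarith
  subst hvv
  exact ⟨by linarith, rfl⟩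

lemma exists_add_mul_eq {n₁ n₂ : ℕ} {x : ℤ} (hx : x ∈ levelSet (n₁ * n₂)) :
    ∃ u ∈ levelSet n₂, ∃ v ∈ levelSet n₁, u + n₂ * v = x := by
  obtain ⟨hx, m, hm⟩ := hx
  push_cast at hx hm
  rw [abs_le] at hx
  have hn₂ : (0 : ℤ) < n₂ := pos_of_mul_pos_right (by linarith : (0 : ℤ) < n₁ * n₂) (by positivity)
  have hm₀ : 0 ≤ m := by linarith
  have hq₀ : 0 ≤ m / n₂ := Int.ediv_nonneg hm₀ hn₂.le
  have hq : m / n₂ < n₁ := by rw [Int.ediv_lt_iff_lt_mul hn₂]; linarith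
  have hr₀ : 0 ≤ m % n₂ := Int.emod_nonneg m hn₂.ne'
  have hr : m % n₂ < n₂ := Int.emod_lt_of_pos m hn₂
  have hdiv : n₂ * (m / n₂) + m % n₂ = m := Int.mul_ediv_add_emod m n₂
  refine ⟨2 * (m % n₂) + 1 - n₂, ⟨by rw [abs_le]; omega, m % n₂, by ring⟩,
    2 * (m / n₂) + 1 - n₁, ⟨by rw [abs_le]; omega, m / n₂, by ring⟩, ?_⟩
  linear_combination 2 * hdiv - hm

theorem levelSet_bijOn_add_mul (n₁ n₂ : ℕ) :
    BijOn (fun uv : ℤ × ℤ => uv.1 + n₂ * uv.2) (levelSet n₂ ×ˢ levelSet n₁) (levelSet (n₁ * n₂)) :=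
  ⟨fun _ huv => add_mul_mem_levelSet huv.1 huv.2,
    fun _ huv _ huv' h => Prod.ext_iff.2 (eq_and_eq_of_add_mul_eq huv.1 huv'.1 huv.2 huv'.2 h),
    fun _ hx => by
      obtain ⟨u, hu, v, hv, rfl⟩ := exists_add_mul_eq hx
      exact ⟨(u, v), ⟨hu, hv⟩, rfl⟩⟩

end LevelSet

theorem latin_hypercube_column_b_general (n₁ n₂ : ℕ)
    (a : Fin n₁ → ℤ) (ha : ∀ i, a i = 1 ∨ a i = -1)
    (b : Fin n₂ → ℤ) (hb : Set.BijOn b Set.univ (levelSet n₂))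
    (c : Fin n₁ → ℤ) (hc : Set.BijOn c Set.univ (levelSet n₁))
    (d : Fin n₂ → ℤ) (hd : ∀ j, d j = 1 ∨ d j = -1)
    (hbd : ∀ q q' : Fin n₂, b q = -b q' → d q = d q') :
    Set.BijOn (fun ij : Fin n₁ × Fin n₂ => a ij.1 * b ij.2 + (n₂ : ℤ) * c ij.1 * d ij.2)
      Set.univ (levelSet (n₁ * n₂)) := by
  have h := (levelSet_bijOn_add_mul n₁ n₂).comp
    (bijOn_sign_twist (fun _ => neg_mem_levelSet) (fun _ => neg_mem_levelSet) ha hb hc hd hbd)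
  simpa only [Function.comp_def, mul_assoc] using h

theorem latin_hypercube_column_b (n₁ n₂ : ℕ) (hn₁ : 0 < n₁) (hn₂ : 0 < n₂)
    (a : Fin n₁ → ℤ) (ha : ∀ i, a i = 1 ∨ a i = -1)
    (b : Fin n₂ → ℤ) (hb : Set.BijOn b Set.univ (levelSet n₂))
    (c : Fin n₁ → ℤ) (hc : Set.BijOn c Set.univ (levelSet n₁))
    (d : Fin n₂ → ℤ) (hd : ∀ j, d j = 1 ∨ d j = -1)
    (hbd : ∀ q q' : Fin n₂, b q = -b q' → d q = d q') :
    Set.BijOn (fun ij : Fin n₁ × Fin n₂ => a ij.1 * b ij.2 + (n₂ : ℤ) * c ij.1 * d ij.2)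
      Set.univ (levelSet (n₁ * n₂)) :=
  latin_hypercube_column_b_general n₁ n₂ a ha b hb c hc d hd hbd
end

section
/- Let A be an n₁×m₁ and D an n₂×m₂ real matrix, each with entries ±1 and with orthogonal columns (AᵀA = n₁·I, DᵀD = n₂·I). Let B be an n₂×m₂ and C an n₁×m₁ real matrix with orthogonal columns, and suppose AᵀC = 0 or BᵀD = 0. Then L = A ⊗ B + n₂·(C ⊗ D) satisfies LᵀL = n₁·I_{m₁} ⊗ (BᵀB) + n₂³·(CᵀC) ⊗ I_{m₂}; in particular LᵀL is diagonal, so all columns of L are mutually orthogonal. -/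
/-!
Expanding the Gram matrix of `L = A ⊗ B + n₂ • (C ⊗ D)` gives four Kronecker products
`(Xᵀ Y) ⊗ (X'ᵀ Y')`. Each cross term contains the factor `Aᵀ C` or `Bᵀ D`, one of which vanishes, and
the orthogonality `AᵀA = n₁ I`, `DᵀD = n₂ I` turns the two remaining terms into
`n₁ (I ⊗ BᵀB)` and `n₂³ (CᵀC ⊗ I)`, both diagonal because `BᵀB` and `CᵀC` are.
-/

open Matrix Kronecker

section

variable {R l m n p q r : Type*} [CommRing R]

theorem gram_add_smul_of_transpose_mul_eq_zero [Fintype l] (X Y : Matrix l m R) (c : R)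
    (hXY : Xᵀ * Y = 0) :
    (X + c • Y)ᵀ * (X + c • Y) = Xᵀ * X + c ^ 2 • (Yᵀ * Y) := by
  have hYX : Yᵀ * X = 0 := by
    rw [← transpose_transpose (Yᵀ * X), transpose_mul, transpose_transpose, hXY, transpose_zero]
  simp only [transpose_add, transpose_smul, Matrix.add_mul, Matrix.mul_add, Matrix.smul_mul,
    Matrix.mul_smul, hXY, hYX, smul_zero, add_zero, zero_add, smul_smul, sq]

theorem transpose_kronecker_mul_kronecker [Fintype l] [Fintype n] (A : Matrix l m R)
    (B : Matrix n p R) (C : Matrix l q R) (D : Matrix n r R) :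
    (A ⊗ₖ B)ᵀ * (C ⊗ₖ D) = (Aᵀ * C) ⊗ₖ (Bᵀ * D) := by
  rw [← kroneckerMap_transpose, mul_kronecker_mul]

end

theorem gram_of_kronecker_construction_general (n₁ m₁ n₂ m₂ : ℕ)
    (A : Matrix (Fin n₁) (Fin m₁) ℝ)
    (hA : Aᵀ * A = (n₁ : ℝ) • (1 : Matrix (Fin m₁) (Fin m₁) ℝ))
    (D : Matrix (Fin n₂) (Fin m₂) ℝ)
    (hD : Dᵀ * D = (n₂ : ℝ) • (1 : Matrix (Fin m₂) (Fin m₂) ℝ))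
    (B : Matrix (Fin n₂) (Fin m₂) ℝ) (hB : (Bᵀ * B).IsDiag)
    (C : Matrix (Fin n₁) (Fin m₁) ℝ) (hC : (Cᵀ * C).IsDiag)
    (horth : Aᵀ * C = 0 ∨ Bᵀ * D = 0)
    (L : Matrix (Fin n₁ × Fin n₂) (Fin m₁ × Fin m₂) ℝ)
    (hL : L = A ⊗ₖ B + (n₂ : ℝ) • (C ⊗ₖ D)) :
    Lᵀ * L = (n₁ : ℝ) • ((1 : Matrix (Fin m₁) (Fin m₁) ℝ) ⊗ₖ (Bᵀ * B))
        + ((n₂ : ℝ) ^ 3) • ((Cᵀ * C) ⊗ₖ (1 : Matrix (Fin m₂) (Fin m₂) ℝ))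
      ∧ (Lᵀ * L).IsDiag := by
  have hcross : (A ⊗ₖ B)ᵀ * (C ⊗ₖ D) = 0 := by
    rw [transpose_kronecker_mul_kronecker]
    rcases horth with h | h <;> simp [h]
  have hgram : Lᵀ * L = (n₁ : ℝ) • ((1 : Matrix (Fin m₁) (Fin m₁) ℝ) ⊗ₖ (Bᵀ * B))
      + ((n₂ : ℝ) ^ 3) • ((Cᵀ * C) ⊗ₖ (1 : Matrix (Fin m₂) (Fin m₂) ℝ)) := by
    rw [hL, gram_add_smul_of_transpose_mul_eq_zero _ _ _ hcross,
      transpose_kronecker_mul_kronecker, transpose_kronecker_mul_kronecker, hA, hD,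
      smul_kronecker, kronecker_smul, smul_smul, ← pow_succ]
  refine ⟨hgram, ?_⟩
  rw [hgram]
  exact ((isDiag_one.kronecker hB).smul _).add ((hC.kronecker isDiag_one).smul _)

theorem gram_of_kronecker_construction (n₁ m₁ n₂ m₂ : ℕ)
    (A : Matrix (Fin n₁) (Fin m₁) ℝ) (hA1 : ∀ i j, A i j = 1 ∨ A i j = -1)
    (hA : Aᵀ * A = (n₁ : ℝ) • (1 : Matrix (Fin m₁) (Fin m₁) ℝ))
    (D : Matrix (Fin n₂) (Fin m₂) ℝ) (hD1 : ∀ i j, D i j = 1 ∨ D i j = -1)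
    (hD : Dᵀ * D = (n₂ : ℝ) • (1 : Matrix (Fin m₂) (Fin m₂) ℝ))
    (B : Matrix (Fin n₂) (Fin m₂) ℝ) (hB : (Bᵀ * B).IsDiag)
    (C : Matrix (Fin n₁) (Fin m₁) ℝ) (hC : (Cᵀ * C).IsDiag)
    (horth : Aᵀ * C = 0 ∨ Bᵀ * D = 0)
    (L : Matrix (Fin n₁ × Fin n₂) (Fin m₁ × Fin m₂) ℝ)
    (hL : L = A ⊗ₖ B + (n₂ : ℝ) • (C ⊗ₖ D)) :
    Lᵀ * L = (n₁ : ℝ) • ((1 : Matrix (Fin m₁) (Fin m₁) ℝ) ⊗ₖ (Bᵀ * B))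
        + ((n₂ : ℝ) ^ 3) • ((Cᵀ * C) ⊗ₖ (1 : Matrix (Fin m₂) (Fin m₂) ℝ))
      ∧ (Lᵀ * L).IsDiag :=
  gram_of_kronecker_construction_general n₁ m₁ n₂ m₂ A hA D hD B hB C hC horth L hL
end

section
/- With L constructed as in the Kronecker construction L = A ⊗ B + n₂·(C ⊗ D) satisfying the hypotheses of Proposition 4 (A, D orthogonal ±1 matrices; AᵀC = 0 or BᵀD = 0; B, C, L Latin hypercubes of n₂, n₁, n = n₁n₂ runs respectively), the maximum absolute column correlation satisfies ρ_M(L) = max{ w₃·ρ_M(B), w₄·ρ_M(C) } where w₃ = (n₂²−1)/(n²−1) and w₄ = n₂²(n₁²−1)/(n²−1). -/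
open Matrix Kronecker

/-- Column correlation `ρ_{jj'}(X)`. -/
noncomputable def rho {ι κ : Type*} [Fintype ι] (X : Matrix ι κ ℝ) (j j' : κ) : ℝ :=
  (∑ i, X i j * X i j') / Real.sqrt ((∑ i, X i j ^ 2) * (∑ i, X i j' ^ 2))

/-- Maximum absolute correlation `ρ_M(X) = max_{j ≠ j'} |ρ_{jj'}(X)|`. -/
noncomputable def rhoM {ι κ : Type*} [Fintype ι] (X : Matrix ι κ ℝ) : ℝ :=
  sSup {r : ℝ | ∃ j j' : κ, j ≠ j' ∧ r = |rho X j j'|}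

/-- The multiset of the `n` centered equally spaced Latin hypercube levels. -/
noncomputable def latinLevels (n : ℕ) : Multiset ℝ :=
  Finset.univ.val.map fun k : Fin n => (k : ℝ) - ((n : ℝ) - 1) / 2

/-- Each column of `X` is a permutation of the `n` Latin hypercube levels. -/
def IsLH {ι κ : Type*} [Fintype ι] (n : ℕ) (X : Matrix ι κ ℝ) : Prop :=
  ∀ j, (Finset.univ.val.map fun i => X i j) = latinLevels n

/-!
Since `AᵀA = n₁ I`, `DᵀD = n₂ I` and `AᵀC ⊗ BᵀD = 0`, the Gram matrix of
`L = A ⊗ B + n₂ (C ⊗ D)` is `LᵀL = n₁ (I ⊗ BᵀB) + n₂³ (CᵀC ⊗ I)`. So the correlation of `L`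
between columns `(a, b)` and `(a, b')` is a fixed multiple of `ρ_{bb'}(B)`, the one between
`(a, b)` and `(a', b)` a fixed multiple of `ρ_{aa'}(C)`, and all others vanish. With
`s(k) = k(k² - 1)/12` the column sum of squares of a Latin hypercube of `k` runs, the multiples are
`n₁ s(n₂) / s(n) = w₃` and `n₂³ s(n₁) / s(n) = w₄`. Finally `rank (DᵀD) = m₂` forces `n₂ = 0` or
`n₂ ≥ m₂ ≥ 2`, and likewise for `n₁`, so all these sums of squares are positive outside the
empty designs.
-/

theorem sum_range_sub_sq (n : ℕ) (c : ℝ) :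
    ∑ k ∈ Finset.range n, ((k : ℝ) - c) ^ 2
      = n * c ^ 2 - n * (n - 1) * c + n * (n - 1) * (2 * n - 1) / 6 := by
  induction n with
  | zero => simp
  | succ n ih => rw [Finset.sum_range_succ, ih]; push_cast; ring

theorem sum_map_sq_latinLevels (n : ℕ) :
    ((latinLevels n).map (· ^ 2)).sum = n * ((n : ℝ) ^ 2 - 1) / 12 := by
  rw [latinLevels, Multiset.map_map]
  change ∑ k : Fin n, ((k : ℝ) - ((n : ℝ) - 1) / 2) ^ 2 = _
  rw [Fin.sum_univ_eq_sum_range (fun k => ((k : ℝ) - ((n : ℝ) - 1) / 2) ^ 2), sum_range_sub_sq]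
  ring

theorem IsLH.sum_sq {ι κ : Type*} [Fintype ι] {n : ℕ} {X : Matrix ι κ ℝ} (hX : IsLH n X)
    (j : κ) : ∑ i, X i j ^ 2 = n * ((n : ℝ) ^ 2 - 1) / 12 := by
  rw [← sum_map_sq_latinLevels, ← hX j, Multiset.map_map]
  rfl

theorem eq_zero_or_le_of_transpose_mul_self_eq_smul_one {n m : ℕ} {D : Matrix (Fin n) (Fin m) ℝ}
    (hD : Dᵀ * D = (n : ℝ) • 1) : n = 0 ∨ m ≤ n := by
  refine or_iff_not_imp_left.mpr fun hn => ?_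
  calc m = (Dᵀ * D).rank := by
        rw [hD, rank_smul_of_mem_nonZeroDivisors _ (mem_nonZeroDivisors_of_ne_zero (by simpa)),
          rank_one, Fintype.card_fin]
    _ = D.rank := rank_transpose_mul_self D
    _ ≤ n := rank_le_height D

section Correlation

variable {ι κ : Type*} [Fintype ι]

theorem sum_sq_eq_transpose_mul_self_apply (X : Matrix ι κ ℝ) (j : κ) :
    ∑ i, X i j ^ 2 = (Xᵀ * X) j j := by
  simp only [mul_apply, transpose_apply, sq]

theorem rho_eq_transpose_mul_self_div {X : Matrix ι κ ℝ} {s : ℝ} (hs : 0 ≤ s)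
    (hX : ∀ j, ∑ i, X i j ^ 2 = s) (j j' : κ) : rho X j j' = (Xᵀ * X) j j' / s := by
  simp only [rho, hX, Real.sqrt_mul_self hs, mul_apply, transpose_apply]

theorem rhoM_nonneg (X : Matrix ι κ ℝ) : 0 ≤ rhoM X :=
  Real.sSup_nonneg (by rintro _ ⟨j, j', -, rfl⟩; exact abs_nonneg _)

theorem rhoM_le {X : Matrix ι κ ℝ} {c : ℝ} (hc : 0 ≤ c)
    (h : ∀ j j', j ≠ j' → |rho X j j'| ≤ c) : rhoM X ≤ c :=
  Real.sSup_le (by rintro _ ⟨j, j', hj, rfl⟩; exact h j j' hj) hc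

theorem abs_rho_le_rhoM [Finite κ] (X : Matrix ι κ ℝ) {j j' : κ} (hj : j ≠ j') :
    |rho X j j'| ≤ rhoM X := by
  refine le_csSup (Set.Finite.bddAbove ?_) ⟨j, j', hj, rfl⟩
  refine (Set.finite_range fun p : κ × κ => |rho X p.1 p.2|).subset ?_
  rintro _ ⟨j, j', -, rfl⟩
  exact ⟨(j, j'), rfl⟩

theorem rhoM_of_isEmpty [IsEmpty ι] (X : Matrix ι κ ℝ) : rhoM X = 0 :=
  le_antisymm (rhoM_le le_rfl fun j j' _ => by simp [rho]) (rhoM_nonneg X)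

theorem mul_rhoM_le_rhoM {ι' κ' : Type*} [Fintype ι'] [Finite κ'] {X : Matrix ι κ ℝ}
    {Y : Matrix ι' κ' ℝ} {w : ℝ} (hw : 0 ≤ w)
    (h : ∀ j j', j ≠ j' → ∃ k k', k ≠ k' ∧ w * |rho X j j'| = |rho Y k k'|) :
    w * rhoM X ≤ rhoM Y := by
  rcases hw.eq_or_lt with rfl | hw
  · rw [zero_mul]; exact rhoM_nonneg Y
  rw [mul_comm, ← le_div_iff₀ hw]
  refine rhoM_le (div_nonneg (rhoM_nonneg Y) hw.le) fun j j' hj => ?_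
  obtain ⟨k, k', hk, hwk⟩ := h j j' hj
  rw [le_div_iff₀ hw, mul_comm, hwk]
  exact abs_rho_le_rhoM Y hk

end Correlation

theorem rhoM_eq_max_of_rho_eq {ι ι₁ ι₂ κ₁ κ₂ : Type*} [Fintype ι] [Fintype ι₁] [Fintype ι₂]
    [Finite κ₁] [Finite κ₂] [Nontrivial κ₁] [Nontrivial κ₂]
    {L : Matrix ι (κ₁ × κ₂) ℝ} {B : Matrix ι₂ κ₂ ℝ} {C : Matrix ι₁ κ₁ ℝ} {w₃ w₄ : ℝ}
    (hw₃ : 0 ≤ w₃) (hw₄ : 0 ≤ w₄)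
    (hfst : ∀ a b b', b ≠ b' → rho L (a, b) (a, b') = w₃ * rho B b b')
    (hsnd : ∀ a a' b, a ≠ a' → rho L (a, b) (a', b) = w₄ * rho C a a')
    (hoff : ∀ a a' b b', a ≠ a' → b ≠ b' → rho L (a, b) (a', b') = 0) :
    rhoM L = max (w₃ * rhoM B) (w₄ * rhoM C) := by
  obtain ⟨a₀⟩ : Nonempty κ₁ := inferInstance
  obtain ⟨b₀⟩ : Nonempty κ₂ := inferInstance
  refine le_antisymm (rhoM_le ?_ ?_) (max_le ?_ ?_)
  · exact le_max_of_le_left (mul_nonneg hw₃ (rhoM_nonneg B))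
  · rintro ⟨a, b⟩ ⟨a', b'⟩ hne
    by_cases ha : a = a'
    · subst ha
      have hb : b ≠ b' := fun hb => hne (by rw [hb])
      rw [hfst a b b' hb, abs_mul, abs_of_nonneg hw₃]
      exact le_max_of_le_left (mul_le_mul_of_nonneg_left (abs_rho_le_rhoM B hb) hw₃)
    by_cases hb : b = b'
    · subst hb
      rw [hsnd a a' b ha, abs_mul, abs_of_nonneg hw₄]
      exact le_max_of_le_right (mul_le_mul_of_nonneg_left (abs_rho_le_rhoM C ha) hw₄)
    rw [hoff a a' b b' ha hb, abs_zero]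
    exact le_max_of_le_left (mul_nonneg hw₃ (rhoM_nonneg B))
  · refine mul_rhoM_le_rhoM hw₃ fun b b' hb => ⟨(a₀, b), (a₀, b'), ?_, ?_⟩
    · simpa using hb
    · rw [hfst a₀ b b' hb, abs_mul, abs_of_nonneg hw₃]
  · refine mul_rhoM_le_rhoM hw₄ fun a a' ha => ⟨(a, b₀), (a', b₀), ?_, ?_⟩
    · simpa using ha
    · rw [hsnd a a' b₀ ha, abs_mul, abs_of_nonneg hw₄]

theorem transpose_mul_self_kronecker_add_smul_kronecker {R ι₁ ι₂ κ₁ κ₂ : Type*} [CommRing R]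
    [Fintype ι₁] [Fintype ι₂] [DecidableEq κ₁] [DecidableEq κ₂]
    {A C : Matrix ι₁ κ₁ R} {B D : Matrix ι₂ κ₂ R} {a d : R} (t : R)
    (hA : Aᵀ * A = a • 1) (hD : Dᵀ * D = d • 1) (horth : Aᵀ * C = 0 ∨ Bᵀ * D = 0) :
    (A ⊗ₖ B + t • (C ⊗ₖ D))ᵀ * (A ⊗ₖ B + t • (C ⊗ₖ D))
      = a • (1 ⊗ₖ (Bᵀ * B)) + (t ^ 2 * d) • ((Cᵀ * C) ⊗ₖ 1) := by
  have hcross : (A ⊗ₖ B)ᵀ * (C ⊗ₖ D) = 0 := by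
    rw [← kroneckerMap_transpose, ← mul_kronecker_mul]
    rcases horth with h | h <;> simp [h]
  have hcross' : (C ⊗ₖ D)ᵀ * (A ⊗ₖ B) = 0 := by
    rw [← transpose_transpose (A ⊗ₖ B), ← transpose_mul, hcross, transpose_zero]
  rw [transpose_add, transpose_smul, Matrix.add_mul, Matrix.mul_add, Matrix.mul_add,
    Matrix.smul_mul, Matrix.mul_smul, Matrix.smul_mul, Matrix.mul_smul, hcross, hcross', ← kroneckerMap_transpose, ← kroneckerMap_transpose,
    ← mul_kronecker_mul, ← mul_kronecker_mul, hA, hD, smul_kronecker, kronecker_smul, smul_zero, add_zero, zero_add, smul_smul, smul_smul, sq]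

theorem rhoM_eq_max_of_transpose_mul_self_eq {ι ι₁ ι₂ κ₁ κ₂ : Type*} [Fintype ι] [Fintype ι₁]
    [Fintype ι₂] [Fintype κ₁] [Fintype κ₂] [DecidableEq κ₁] [DecidableEq κ₂]
    [Nontrivial κ₁] [Nontrivial κ₂]
    {L : Matrix ι (κ₁ × κ₂) ℝ} {B : Matrix ι₂ κ₂ ℝ} {C : Matrix ι₁ κ₁ ℝ} {p q sB sC : ℝ}
    (hp : 0 < p) (hq : 0 ≤ q) (hsB : 0 < sB) (hsC : 0 < sC)
    (hB : ∀ j, ∑ i, B i j ^ 2 = sB) (hC : ∀ j, ∑ i, C i j ^ 2 = sC)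
    (hL : Lᵀ * L = p • (1 ⊗ₖ (Bᵀ * B)) + q • ((Cᵀ * C) ⊗ₖ 1)) :
    rhoM L = max (p * sB / (p * sB + q * sC) * rhoM B)
      (q * sC / (p * sB + q * sC) * rhoM C) := by
  have hgram : ∀ a a' b b', (Lᵀ * L) (a, b) (a', b')
      = p * ((1 : Matrix κ₁ κ₁ ℝ) a a' * (Bᵀ * B) b b')
        + q * ((Cᵀ * C) a a' * (1 : Matrix κ₂ κ₂ ℝ) b b') := by
    intro a a' b b'
    rw [hL]
    rfl
  have hs : 0 < p * sB + q * sC := by positivity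
  have hLs : ∀ j, ∑ i, L i j ^ 2 = p * sB + q * sC := by
    rintro ⟨a, b⟩
    rw [sum_sq_eq_transpose_mul_self_apply, hgram, one_apply_eq, one_apply_eq,
      ← sum_sq_eq_transpose_mul_self_apply, ← sum_sq_eq_transpose_mul_self_apply, hB, hC,
      one_mul, mul_one]
  have hrhoL := rho_eq_transpose_mul_self_div hs.le hLs
  have hrhoB := rho_eq_transpose_mul_self_div hsB.le hB
  have hrhoC := rho_eq_transpose_mul_self_div hsC.le hC
  apply rhoM_eq_max_of_rho_eq (by positivity) (by positivity)
  · intro a b b' hb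
    rw [hrhoL, hrhoB, hgram, one_apply_eq, one_apply_ne hb, one_mul, mul_zero, mul_zero, add_zero]
    field_simp
  · intro a a' b ha
    rw [hrhoL, hrhoC, hgram, one_apply_eq, one_apply_ne ha, mul_one, zero_mul, mul_zero, zero_add]
    field_simp
  · intro a a' b b' ha hb
    rw [hrhoL, hgram, one_apply_ne ha, one_apply_ne hb]
    simp

theorem rhoM_of_kronecker_construction_general (n₁ m₁ n₂ m₂ : ℕ)
    (hm₁ : 2 ≤ m₁) (hm₂ : 2 ≤ m₂)
    (A : Matrix (Fin n₁) (Fin m₁) ℝ)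
    (hA : Aᵀ * A = (n₁ : ℝ) • (1 : Matrix (Fin m₁) (Fin m₁) ℝ))
    (D : Matrix (Fin n₂) (Fin m₂) ℝ)
    (hD : Dᵀ * D = (n₂ : ℝ) • (1 : Matrix (Fin m₂) (Fin m₂) ℝ))
    (B : Matrix (Fin n₂) (Fin m₂) ℝ) (hB : IsLH n₂ B)
    (C : Matrix (Fin n₁) (Fin m₁) ℝ) (hC : IsLH n₁ C)
    (horth : Aᵀ * C = 0 ∨ Bᵀ * D = 0)
    (L : Matrix (Fin n₁ × Fin n₂) (Fin m₁ × Fin m₂) ℝ)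
    (hL : L = A ⊗ₖ B + (n₂ : ℝ) • (C ⊗ₖ D)) :
    rhoM L = max ((((n₂ : ℝ) ^ 2 - 1) / (((n₁ * n₂ : ℕ) : ℝ) ^ 2 - 1)) * rhoM B)
      (((n₂ : ℝ) ^ 2 * ((n₁ : ℝ) ^ 2 - 1) / (((n₁ * n₂ : ℕ) : ℝ) ^ 2 - 1)) * rhoM C) := by
  have : Nontrivial (Fin m₁) := Fin.nontrivial_iff_two_le.mpr hm₁
  have : Nontrivial (Fin m₂) := Fin.nontrivial_iff_two_le.mpr hm₂
  obtain rfl | hn₂ : n₂ = 0 ∨ 2 ≤ n₂ := by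
    have := eq_zero_or_le_of_transpose_mul_self_eq_smul_one hD; omega
  · simp [rhoM_of_isEmpty L, rhoM_of_isEmpty B]
  have hr₂ : (2 : ℝ) ≤ n₂ := by exact_mod_cast hn₂
  obtain rfl | hn₁ : n₁ = 0 ∨ 2 ≤ n₁ := by
    have := eq_zero_or_le_of_transpose_mul_self_eq_smul_one hA; omega
  -- With no rows every correlation is `0`, but the denominator `(0 * n₂)² - 1` of `w₃` is `-1`.
  · have hw₃ : ((n₂ : ℝ) ^ 2 - 1) / (((0 * n₂ : ℕ) : ℝ) ^ 2 - 1) ≤ 0 :=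
      div_nonpos_of_nonneg_of_nonpos (by nlinarith) (by norm_num)
    rw [rhoM_of_isEmpty L, rhoM_of_isEmpty C, mul_zero,
      max_eq_right (mul_nonpos_of_nonpos_of_nonneg hw₃ (rhoM_nonneg B))]
  have hr₁ : (2 : ℝ) ≤ n₁ := by exact_mod_cast hn₁
  have hgram := transpose_mul_self_kronecker_add_smul_kronecker (n₂ : ℝ) hA hD horth
  rw [← hL] at hgram
  rw [rhoM_eq_max_of_transpose_mul_self_eq (by positivity) (by positivity) (by nlinarith)
    (by nlinarith) hB.sum_sq hC.sum_sq hgram]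
  have hsum : (n₁ : ℝ) * (n₂ * (n₂ ^ 2 - 1) / 12) + n₂ ^ 2 * n₂ * (n₁ * (n₁ ^ 2 - 1) / 12)
      = n₁ * n₂ * (((n₁ * n₂ : ℕ) : ℝ) ^ 2 - 1) / 12 := by
    push_cast; ring
  have hN : 0 < ((n₁ * n₂ : ℕ) : ℝ) ^ 2 - 1 := by
    have : (4 : ℝ) ≤ (n₁ * n₂ : ℕ) := by exact_mod_cast Nat.mul_le_mul hn₁ hn₂
    nlinarith
  rw [hsum]
  congr 2 <;> field_simp

theorem rhoM_of_kronecker_construction (n₁ m₁ n₂ m₂ : ℕ)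
    (hm₁ : 2 ≤ m₁) (hm₂ : 2 ≤ m₂)
    (A : Matrix (Fin n₁) (Fin m₁) ℝ) (hA1 : ∀ i j, A i j = 1 ∨ A i j = -1)
    (hA : Aᵀ * A = (n₁ : ℝ) • (1 : Matrix (Fin m₁) (Fin m₁) ℝ))
    (D : Matrix (Fin n₂) (Fin m₂) ℝ) (hD1 : ∀ i j, D i j = 1 ∨ D i j = -1)
    (hD : Dᵀ * D = (n₂ : ℝ) • (1 : Matrix (Fin m₂) (Fin m₂) ℝ))
    (B : Matrix (Fin n₂) (Fin m₂) ℝ) (hB : IsLH n₂ B)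
    (C : Matrix (Fin n₁) (Fin m₁) ℝ) (hC : IsLH n₁ C)
    (horth : Aᵀ * C = 0 ∨ Bᵀ * D = 0)
    (L : Matrix (Fin n₁ × Fin n₂) (Fin m₁ × Fin m₂) ℝ)
    (hL : L = A ⊗ₖ B + (n₂ : ℝ) • (C ⊗ₖ D))
    (hLlh : IsLH (n₁ * n₂) L) :
    rhoM L = max ((((n₂ : ℝ) ^ 2 - 1) / (((n₁ * n₂ : ℕ) : ℝ) ^ 2 - 1)) * rhoM B)
      (((n₂ : ℝ) ^ 2 * ((n₁ : ℝ) ^ 2 - 1) / (((n₁ * n₂ : ℕ) : ℝ) ^ 2 - 1)) * rhoM C) :=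
  rhoM_of_kronecker_construction_general n₁ m₁ n₂ m₂ hm₁ hm₂ A hA D hD B hB C hC horth L hL
end
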